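/- arXiv:2209.06171 — 2 statements merged into one kernel-verified Lean document; each statement's English description precedes it below -/
import Mathlib

section
/- Let D be an oriented graph and let P ⊆ D be a forward-induced directed path. Then the subdigraph of D induced by V(P) has dichromatic number at most 2. -/
namespace DichiP4

variable {V : Type*}

/-- An oriented graph: an arc relation with no digons (hence also no loops). -/
def Oriented (A : V → V → Prop) : Prop := ∀ u v, A u v → ¬ A v u

/-- Adjacency in the underlying (undirected) graph. -/
def Adj (A : V → V → Prop) (u v : V) : Prop := A u v ∨ A v u

/-- The neighborhood `N(v)` of a vertex in the underlying graph. -/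
def nbr (A : V → V → Prop) (v : V) : Set V := {w | Adj A v w}

/-- `N(S)`: the neighborhood of a set of vertices. -/
def nbrSet (A : V → V → Prop) (S : Set V) : Set V := (⋃ v ∈ S, nbr A v) \ S

/-- `N[S]`: the closed neighborhood of a set of vertices. -/
def cnbrSet (A : V → V → Prop) (S : Set V) : Set V := ⋃ v ∈ S, insert v (nbr A v)

/-- A clique in the underlying graph (= the vertex set of a tournament). -/
def IsClique (A : V → V → Prop) (K : Set V) : Prop :=
  ∀ u ∈ K, ∀ v ∈ K, u ≠ v → Adj A u v

/-- The clique number `ω(D)` of the underlying graph. -/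
noncomputable def cliqueNum (A : V → V → Prop) : ℕ :=
  sSup {n | ∃ K : Set V, IsClique A K ∧ K.Finite ∧ K.ncard = n}

/-- The set `s` induces an acyclic subdigraph (no directed cycle within `s`). -/
def AcyclicOn (A : V → V → Prop) (s : Set V) : Prop :=
  ∀ v, ¬ Relation.TransGen (fun x y => x ∈ s ∧ y ∈ s ∧ A x y) v v

/-- The set `s` admits a dicoloring with `k` colors: every color class induces an
acyclic subdigraph. -/
def DicolorableOn (A : V → V → Prop) (s : Set V) (k : ℕ) : Prop :=
  ∃ c : V → ℕ, (∀ v ∈ s, c v < k) ∧ ∀ i : ℕ, AcyclicOn A {v | v ∈ s ∧ c v = i}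

/-- The dichromatic number `χ⃗(s)` of the subdigraph induced by `s`. -/
noncomputable def dichi (A : V → V → Prop) (s : Set V) : ℕ :=
  sInf {k | DicolorableOn A s k}

/-- `A` has an induced subdigraph isomorphic to `B`. -/
def HasInducedCopy {W : Type*} (A : V → V → Prop) (B : W → W → Prop) : Prop :=
  ∃ f : W → V, Function.Injective f ∧ ∀ x y : W, B x y ↔ A (f x) (f y)

/-- `A` is `B`-free: no induced subdigraph of `A` is isomorphic to `B`. -/
def Free {W : Type*} (A : V → V → Prop) (B : W → W → Prop) : Prop :=
  ¬ HasInducedCopy A B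

/-- `P⃗4`: the orientation of the path `0 – 1 – 2 – 3` with arcs `0→1, 1→2, 2→3`. -/
def P4vec : Fin 4 → Fin 4 → Prop := fun x y =>
  (x = 0 ∧ y = 1) ∨ (x = 1 ∧ y = 2) ∨ (x = 2 ∧ y = 3)

/-- `A⃗4`: the orientation of the path `0 – 1 – 2 – 3` with arcs `1→0, 1→2, 3→2`. -/
def A4vec : Fin 4 → Fin 4 → Prop := fun x y =>
  (x = 1 ∧ y = 0) ∨ (x = 1 ∧ y = 2) ∨ (x = 3 ∧ y = 2)

/-- `Q⃗4`: the orientation of the path `0 – 1 – 2 – 3` with arcs `0→1, 2→1, 3→2`. -/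
def Q4vec : Fin 4 → Fin 4 → Prop := fun x y =>
  (x = 0 ∧ y = 1) ∨ (x = 2 ∧ y = 1) ∨ (x = 3 ∧ y = 2)

/-- `Q⃗4'`: the orientation of the path `0 – 1 – 2 – 3` with arcs `1→0, 2→1, 2→3`. -/
def Q4'vec : Fin 4 → Fin 4 → Prop := fun x y =>
  (x = 1 ∧ y = 0) ∨ (x = 2 ∧ y = 1) ∨ (x = 2 ∧ y = 3)

/-- `B` is an orientation of the path on four vertices `0 – 1 – 2 – 3`. -/
def IsP4Orientation (B : Fin 4 → Fin 4 → Prop) : Prop :=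
  Oriented B ∧ ∀ x y : Fin 4, Adj B x y ↔ ((x : ℕ) + 1 = (y : ℕ) ∨ (y : ℕ) + 1 = (x : ℕ))

/-- `p 1 → p 2 → ⋯ → p ℓ` is a directed path in `A` (distinct vertices). -/
def IsDirPath (A : V → V → Prop) (ℓ : ℕ) (p : ℕ → V) : Prop :=
  1 ≤ ℓ ∧ Set.InjOn p (Set.Icc 1 ℓ) ∧ ∀ i, 1 ≤ i → i < ℓ → A (p i) (p (i + 1))

/-- A directed path `p 1 → ⋯ → p ℓ` is forward-induced: no arc `(p i, p j)` with
`j > i + 1`. -/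
def ForwardInduced (A : V → V → Prop) (ℓ : ℕ) (p : ℕ → V) : Prop :=
  ∀ i j, 1 ≤ i → j ≤ ℓ → i + 1 < j → ¬ A (p i) (p j)

/-- `p 1 → ⋯ → p ℓ` is a shortest directed path from `p 1` to `p ℓ`. -/
def IsShortestDirPath (A : V → V → Prop) (ℓ : ℕ) (p : ℕ → V) : Prop :=
  IsDirPath A ℓ p ∧
    ∀ (m : ℕ) (q : ℕ → V), IsDirPath A m q → q 1 = p 1 → q m = p ℓ → ℓ ≤ m

/-- The vertex set `V(P)` of the path `p 1, …, p ℓ`. -/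
def pathSet (ℓ : ℕ) (p : ℕ → V) : Set V := p '' Set.Icc 1 ℓ

/-- `N(P)`: the neighborhood of the vertex set of the path. -/
def pathNbrs (A : V → V → Prop) (ℓ : ℕ) (p : ℕ → V) : Set V := nbrSet A (pathSet ℓ p)

/-- `F i`: vertices of `N(P)` whose first neighbor on the path is `p i`. -/
def Fatt (A : V → V → Prop) (ℓ : ℕ) (p : ℕ → V) (i : ℕ) : Set V :=
  {v ∈ pathNbrs A ℓ p | Adj A v (p i) ∧ ∀ i', 1 ≤ i' → i' < i → ¬ Adj A v (p i')}

/-- `L j`: vertices of `N(P)` whose last neighbor on the path is `p j`. -/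
def Latt (A : V → V → Prop) (ℓ : ℕ) (p : ℕ → V) (j : ℕ) : Set V :=
  {v ∈ pathNbrs A ℓ p | Adj A v (p j) ∧ ∀ j', j < j' → j' ≤ ℓ → ¬ Adj A v (p j')}

/-- `F i ⁺`: in-neighbors of `p i` in `F i`. -/
def FattP (A : V → V → Prop) (ℓ : ℕ) (p : ℕ → V) (i : ℕ) : Set V :=
  {v ∈ Fatt A ℓ p i | A v (p i)}

/-- `F i ⁻`: out-neighbors of `p i` in `F i`. -/
def FattM (A : V → V → Prop) (ℓ : ℕ) (p : ℕ → V) (i : ℕ) : Set V :=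
  {v ∈ Fatt A ℓ p i | A (p i) v}

/-- `L j ⁺`: in-neighbors of `p j` in `L j`. -/
def LattP (A : V → V → Prop) (ℓ : ℕ) (p : ℕ → V) (j : ℕ) : Set V :=
  {v ∈ Latt A ℓ p j | A v (p j)}

/-- `L j ⁻`: out-neighbors of `p j` in `L j`. -/
def LattM (A : V → V → Prop) (ℓ : ℕ) (p : ℕ → V) (j : ℕ) : Set V :=
  {v ∈ Latt A ℓ p j | A (p j) v}

/-- `W^p = (F₂⁻ ∪ ⋯ ∪ F_{ℓ-1}⁻) ∪ (L₂⁺ ∪ ⋯ ∪ L_{ℓ-1}⁺)`. -/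
def Wp (A : V → V → Prop) (ℓ : ℕ) (p : ℕ → V) : Set V :=
  (⋃ i ∈ Set.Icc 2 (ℓ - 1), FattM A ℓ p i) ∪ ⋃ i ∈ Set.Icc 2 (ℓ - 1), LattP A ℓ p i

/-- `W^a = (F₂⁺ ∪ ⋯ ∪ F_{ℓ-1}⁺) ∪ (L₂⁻ ∪ ⋯ ∪ L_{ℓ-1}⁻)`. -/
def Wa (A : V → V → Prop) (ℓ : ℕ) (p : ℕ → V) : Set V :=
  (⋃ i ∈ Set.Icc 2 (ℓ - 1), FattP A ℓ p i) ∪ ⋃ i ∈ Set.Icc 2 (ℓ - 1), LattM A ℓ p i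

/-- `R^p = N(P) \ (N({p1, p2, pℓ}) ∪ W^p)`. -/
def Rp (A : V → V → Prop) (ℓ : ℕ) (p : ℕ → V) : Set V :=
  pathNbrs A ℓ p \ (nbrSet A {p 1, p 2, p ℓ} ∪ Wp A ℓ p)

/-- `R^a = N(P) \ (N({p1, pℓ}) ∪ W^a)`. -/
def Ra (A : V → V → Prop) (ℓ : ℕ) (p : ℕ → V) : Set V :=
  pathNbrs A ℓ p \ (nbrSet A {p 1, p ℓ} ∪ Wa A ℓ p)

/-- A dipolar set: a nonempty set `S` partitioned into `S⁺` (no out-neighbor outside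
`S`) and `S⁻` (no in-neighbor outside `S`). -/
def IsDipolar (A : V → V → Prop) (S : Set V) : Prop :=
  S.Nonempty ∧ ∃ Sp Sm : Set V, Sp ∪ Sm = S ∧ Disjoint Sp Sm ∧
    (∀ v ∈ Sp, ∀ w, w ∉ S → ¬ A v w) ∧ ∀ v ∈ Sm, ∀ w, w ∉ S → ¬ A w v

/-- Reachability by a directed path staying inside `s`. -/
def ReachIn (A : V → V → Prop) (s : Set V) (u v : V) : Prop :=
  Relation.ReflTransGen (fun x y => x ∈ s ∧ y ∈ s ∧ A x y) u v

/-- A digraph is strongly connected. -/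
def StronglyConnected (A : V → V → Prop) : Prop :=
  ∀ u v : V, Relation.ReflTransGen A u v

/-- `t` is a strongly connected component of the subdigraph induced by `s`. -/
def IsSCCOf (A : V → V → Prop) (s t : Set V) : Prop :=
  t ⊆ s ∧ t.Nonempty ∧ (∀ u ∈ t, ∀ v ∈ t, ReachIn A s u v) ∧
    ∀ u ∈ t, ∀ v ∈ s, ReachIn A s u v → ReachIn A s v u → v ∈ t

/-- A source strongly connected component: all arcs between it and the rest of `s`
begin in it. -/
def IsSourceSCC (A : V → V → Prop) (s t : Set V) : Prop :=
  IsSCCOf A s t ∧ ∀ u ∈ s, ∀ v ∈ t, A u v → u ∈ t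

/-- A sink strongly connected component: all arcs between it and the rest of `s`
end in it. -/
def IsSinkSCC (A : V → V → Prop) (s t : Set V) : Prop :=
  IsSCCOf A s t ∧ ∀ u ∈ t, ∀ v ∈ s, A u v → v ∈ t

/-- `K` (a tournament of maximum order) and the directed path `p 1 → ⋯ → p ℓ`
(from a source SCC of `D[K]` to a sink SCC of `D[K]`) form a closed tournament
`C = K ∪ V(P)`. -/
def FormsClosedTournament (A : V → V → Prop) (K : Set V) (ℓ : ℕ) (p : ℕ → V) : Prop :=
  IsClique A K ∧ K.Finite ∧ K.ncard = cliqueNum A ∧ IsDirPath A ℓ p ∧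
    (∃ t, IsSourceSCC A K t ∧ p 1 ∈ t) ∧ ∃ t, IsSinkSCC A K t ∧ p ℓ ∈ t

/-- `K` and `P` form a path-minimizing closed tournament: `|P|` is minimum among
all pairs forming a closed tournament. -/
def FormsPathMinClosedTournament (A : V → V → Prop) (K : Set V) (ℓ : ℕ) (p : ℕ → V) :
    Prop :=
  FormsClosedTournament A K ℓ p ∧
    ∀ (K' : Set V) (ℓ' : ℕ) (p' : ℕ → V), FormsClosedTournament A K' ℓ' p' → ℓ ≤ ℓ'

/-- The strong neighborhood of `S`: neighbors of `S` having both an in-neighbor and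
an out-neighbor in `S`. -/
def strongNbrs (A : V → V → Prop) (S : Set V) : Set V :=
  {v ∈ nbrSet A S | (∃ u ∈ S, A u v) ∧ ∃ u ∈ S, A v u}

/-!
Number the vertices of the path by their position on it and colour by parity. Two vertices
of the same colour have positions differing by an even amount, so an arc between them
cannot go one step forward; forward-inducedness rules out longer forward arcs and
orientedness rules out loops. Hence arcs inside a colour class strictly decrease the
position, and no class contains a directed cycle.
-/

theorem acyclicOn_of_rank_lt {α : Type*} [Preorder α] {A : V → V → Prop} {s : Set V}
    (f : V → α) (hf : ∀ x ∈ s, ∀ y ∈ s, A x y → f y < f x) : AcyclicOn A s := by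
  intro v hv
  have hlt : ∀ x y, Relation.TransGen (fun x y => x ∈ s ∧ y ∈ s ∧ A x y) x y → f y < f x := by
    intro x y h
    induction h with
    | single h => exact hf _ h.1 _ h.2.1 h.2.2
    | tail _ h ih => exact (hf _ h.1 _ h.2.1 h.2.2).trans ih
  exact lt_irrefl _ (hlt v v hv)

theorem dichi_le_of_dicolorableOn {A : V → V → Prop} {s : Set V} {k : ℕ}
    (h : DicolorableOn A s k) : dichi A s ≤ k :=
  Nat.sInf_le h

theorem ForwardInduced.lt_or_eq_succ_of_arc {A : V → V → Prop} {ℓ : ℕ} {p : ℕ → V}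
    (hA : Oriented A) (hfi : ForwardInduced A ℓ p) {i j : ℕ} (hi : 1 ≤ i) (hj : j ≤ ℓ)
    (hij : A (p i) (p j)) : j < i ∨ j = i + 1 := by
  have hne : j ≠ i := by
    rintro rfl
    exact hA _ _ hij hij
  have hnot : ¬ i + 1 < j := fun h => hfi i j hi hj h hij
  omega

theorem ForwardInduced.dicolorableOn_pathSet_two {A : V → V → Prop} {ℓ : ℕ} {p : ℕ → V}
    (hA : Oriented A) (hfi : ForwardInduced A ℓ p) : DicolorableOn A (pathSet ℓ p) 2 := by
  set pos : V → ℕ := Function.invFunOn p (Set.Icc 1 ℓ)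
  have hpos : ∀ v ∈ pathSet ℓ p, pos v ∈ Set.Icc 1 ℓ ∧ p (pos v) = v :=
    fun v hv => Function.invFunOn_pos hv
  refine ⟨fun v => pos v % 2, fun v _ => Nat.mod_lt _ two_pos, fun c => ?_⟩
  refine acyclicOn_of_rank_lt pos ?_
  rintro x ⟨hx, hxc⟩ y ⟨hy, hyc⟩ hxy
  obtain ⟨⟨hx1, -⟩, hpx⟩ := hpos x hx
  obtain ⟨⟨-, hyℓ⟩, hpy⟩ := hpos y hy
  rw [← hpx, ← hpy] at hxy
  have hparity : pos x % 2 = pos y % 2 := hxc.trans hyc.symm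
  have hstep := hfi.lt_or_eq_succ_of_arc hA hx1 hyℓ hxy
  omega

theorem dichi_forwardInduced_path_le_two_general {V : Type*}
    (A : V → V → Prop) (hA : Oriented A) (ℓ : ℕ) (p : ℕ → V)
    (hfi : ForwardInduced A ℓ p) :
    dichi A (pathSet ℓ p) ≤ 2 :=
  dichi_le_of_dicolorableOn (hfi.dicolorableOn_pathSet_two hA)

/-- a forward-induced directed path induces a subdigraph of
dichromatic number at most `2`. -/
theorem dichi_forwardInduced_path_le_two {V : Type*} [Fintype V]
    (A : V → V → Prop) (hA : Oriented A) (ℓ : ℕ) (p : ℕ → V)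
    (hp : IsDirPath A ℓ p) (hfi : ForwardInduced A ℓ p) :
    dichi A (pathSet ℓ p) ≤ 2 :=
  dichi_forwardInduced_path_le_two_general A hA ℓ p hfi

end DichiP4
end

section
/- Let P = p1→p2→⋯→p_ℓ be a forward-induced directed path in an oriented graph D, and let (F_1,…,F_ℓ) be the partition of N(P) by first attachment on P. If D is Q⃗4-free, then for all 2 ≤ i < j ≤ ℓ−1 there is no arc from a vertex of F_j to a vertex of F_i. -/
namespace DichiP4

variable {V : Type*}

/-!
Write `q = p (i - 1) → r = p i`. Since the first neighbour of `v` on `P` is `p j` with `j > i`,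
`v` is adjacent to neither `q` nor `r`, while `w` is adjacent to `r` but not to `q`. According to
the direction of the edge `wr`, either `q → r ← w ← v` or `v → w ← r ← q` is then an induced `Q⃗4`.
-/

section

variable {A : V → V → Prop}

theorem adj_comm {u v : V} : Adj A u v ↔ Adj A v u := Or.comm

theorem Oriented.irrefl (hA : Oriented A) (u : V) : ¬ A u u := fun h => hA u u h h

theorem hasInducedCopy_Q4vec (hA : Oriented A) {a b c d : V}
    (hab : A a b) (hcb : A c b) (hdc : A d c)
    (hac : ¬ Adj A a c) (had : ¬ Adj A a d) (hbd : ¬ Adj A b d) :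
    HasInducedCopy A Q4vec := by
  simp only [Adj, not_or] at hac had hbd
  have hba := hA a b hab
  have hbc := hA c b hcb
  have hcd := hA d c hdc
  have hloop := hA.irrefl
  refine ⟨![a, b, c, d], ?_, ?_⟩
  · intro x y h
    fin_cases x <;> fin_cases y <;> simp_all
  · intro x y
    fin_cases x <;> fin_cases y <;> simp_all [Q4vec]

theorem adj_of_mem_Fatt {ℓ i : ℕ} {p : ℕ → V} {v : V} (hv : v ∈ Fatt A ℓ p i) :
    Adj A v (p i) :=
  hv.2.1

theorem not_adj_of_mem_Fatt {ℓ i k : ℕ} {p : ℕ → V} {v : V} (hv : v ∈ Fatt A ℓ p i)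
    (hk : 1 ≤ k) (hki : k < i) : ¬ Adj A v (p k) :=
  hv.2.2 k hk hki

theorem IsDirPath.arc_pred {ℓ i : ℕ} {p : ℕ → V} (hp : IsDirPath A ℓ p) (hi : 2 ≤ i)
    (hiℓ : i ≤ ℓ) : A (p (i - 1)) (p i) := by
  simpa [Nat.sub_add_cancel (by omega : 1 ≤ i)] using hp.2.2 (i - 1) (by omega) (by omega)

end

theorem Q4free_no_backward_arcs_general {V : Type*}
    (A : V → V → Prop) (hA : Oriented A) (hfree : Free A Q4vec)
    (ℓ : ℕ) (p : ℕ → V) (hp : IsDirPath A ℓ p)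
    (i j : ℕ) (h2i : 2 ≤ i) (hij : i < j) (hj : j ≤ ℓ - 1)
    (v w : V) (hv : v ∈ Fatt A ℓ p j) (hw : w ∈ Fatt A ℓ p i) :
    ¬ A v w := by
  intro hvw
  have hqr : A (p (i - 1)) (p i) := hp.arc_pred h2i (by omega)
  have hvq : ¬ Adj A v (p (i - 1)) := not_adj_of_mem_Fatt hv (by omega) (by omega)
  have hvr : ¬ Adj A v (p i) := not_adj_of_mem_Fatt hv (by omega) hij
  have hwq : ¬ Adj A w (p (i - 1)) := not_adj_of_mem_Fatt hw (by omega) (by omega)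
  rcases adj_of_mem_Fatt hw with hwr | hrw
  · exact hfree <| hasInducedCopy_Q4vec hA hqr hwr hvw
      (adj_comm.not.1 hwq) (adj_comm.not.1 hvq) (adj_comm.not.1 hvr)
  · exact hfree <| hasInducedCopy_Q4vec hA hvw hrw hqr hvr hvq hwq

/-- in a `Q⃗4`-free oriented graph, for a forward-induced directed path
`p 1 → ⋯ → p ℓ` and `2 ≤ i < j ≤ ℓ - 1`, there is no arc from `F j` to `F i`. -/
theorem Q4free_no_backward_arcs {V : Type*}
    (A : V → V → Prop) (hA : Oriented A) (hfree : Free A Q4vec)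
    (ℓ : ℕ) (p : ℕ → V) (hp : IsDirPath A ℓ p) (hfi : ForwardInduced A ℓ p)
    (i j : ℕ) (h2i : 2 ≤ i) (hij : i < j) (hj : j ≤ ℓ - 1)
    (v w : V) (hv : v ∈ Fatt A ℓ p j) (hw : w ∈ Fatt A ℓ p i) :
    ¬ A v w :=
  Q4free_no_backward_arcs_general A hA hfree ℓ p hp i j h2i hij hj v w hv hw

end DichiP4
end
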